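/- (Theorem 2.1, d = 2, uniqueness) Let n ≥ 1, r > 0, and let F, G : ℤ² → GL(n,ℂ) satisfy F(y) = G(y) = I for all y ∉ B_r ∩ ℤ². If S(F)(γ_z) = S(G)(γ_z) for every z ∈ ℤ², then F = G. -/

import Mathlib

noncomputable section

open Matrix

/-- Embedding of the lattice `ℤ^d` into Euclidean `ℝ^d`. -/
def emb {d : ℕ} (z : Fin d → ℤ) : EuclideanSpace ℝ (Fin d) := WithLp.toLp 2 (fun i => (z i : ℝ))

/- Ordered product of `Φ` over `supp`: the factors are multiplied so that larger values
of `key` contribute factors further to the left (the value is `1` if no strictly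
`key`-decreasing enumeration of `supp` by a list exists). -/
open Classical in
noncomputable def oprodBy {α G : Type*} [Monoid G] (Φ : α → G) (key : α → ℝ) (supp : Set α) : G :=
  if h : ∃ l : List α, l.Pairwise (fun a b => key b < key a) ∧ ∀ a, a ∈ l ↔ a ∈ supp
  then (h.choose.map Φ).prod else 1

/-- The discrete non-abelian X-ray transform of `F` along the oriented line through `x`
with direction `θ`: the ordered product of `F y` over lattice points `y` on the line,
the point furthest along the orientation contributing the leftmost factor. -/
noncomputable def discS {d : ℕ} {G : Type*} [Monoid G] (F : (Fin d → ℤ) → G)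
    (x θ : EuclideanSpace ℝ (Fin d)) : G :=
  oprodBy F (fun z => ∑ i, ((z i : ℝ) - x i) * θ i)
    {z | (∃ t : ℝ, emb z = x + t • θ) ∧ F z ≠ 1}
/-- The direction of the rational ray γ_z in ℝ²: for z ≠ 0 it is (−z₂, z₁)/|z|, and for
z = 0 it is a fixed rational direction θ₀. -/
def rayDir (θ₀ : EuclideanSpace ℝ (Fin 2)) (z : Fin 2 → ℤ) : EuclideanSpace ℝ (Fin 2) :=
  if z = 0 then θ₀ else ‖emb z‖⁻¹ • emb ![-(z 1), z 0]

/-!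
Suppose `F ≠ G` and pick `z` with `F z ≠ G z` of maximal norm; such points lie in the finite
set `B_r ∩ ℤ²`. The line `γ_z` is orthogonal to `z` at `z`, hence tangent to the circle of
radius `|z|`, so every other lattice point on it lies strictly farther from the origin, where
`F` and `G` agree. The two ordered products along `γ_z` then differ only in the factor at `z`,
and cancelling the remaining factors in the group gives `F z = G z`.
-/

section OrderedProduct

variable {α β M : Type*} [LinearOrder β] [Monoid M]

theorem List.Pairwise.eq_of_mem_iff_of_key_lt {key : α → β} {l₁ l₂ : List α}
    (h₁ : l₁.Pairwise (fun a b => key b < key a)) (h₂ : l₂.Pairwise (fun a b => key b < key a))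
    (hmem : ∀ a, a ∈ l₁ ↔ a ∈ l₂) : l₁ = l₂ :=
  have : Std.Irrefl (fun a b : α => key b < key a) := ⟨fun a => lt_irrefl (key a)⟩
  have : Std.Antisymm (fun a b : α => key b < key a) := ⟨fun _ _ hab hba => (hab.asymm hba).elim⟩
  h₁.eq_of_mem_iff h₂ hmem

theorem List.Pairwise.nodup_of_key_lt {key : α → β} {l : List α}
    (hl : l.Pairwise (fun a b => key b < key a)) : l.Nodup :=
  hl.imp fun hab heq => (heq ▸ hab).false

theorem oprodBy_eq_prod {Φ : α → M} {key : α → ℝ} {supp : Set α} {l : List α}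
    (hl : l.Pairwise (fun a b => key b < key a)) (hmem : ∀ a, a ∈ l ↔ a ∈ supp) :
    oprodBy Φ key supp = (l.map Φ).prod := by
  have hex : ∃ l : List α, l.Pairwise (fun a b => key b < key a) ∧ ∀ a, a ∈ l ↔ a ∈ supp :=
    ⟨l, hl, hmem⟩
  rw [oprodBy, dif_pos hex,
    hex.choose_spec.1.eq_of_mem_iff_of_key_lt hl fun a => (hex.choose_spec.2 a).trans (hmem a).symm]

theorem oprodBy_eq_prod_of_mem_iff {Φ : α → M} {key : α → ℝ} {supp : Set α} {l : List α}
    (hl : l.Pairwise (fun a b => key b < key a)) (hmem : ∀ a, a ∈ supp ↔ a ∈ l ∧ Φ a ≠ 1) :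
    oprodBy Φ key supp = (l.map Φ).prod := by
  classical
  rw [oprodBy_eq_prod (l := l.filter ((· != 1) ∘ Φ)) (hl.filter _) (by simp [hmem]),
    ← List.filter_map, List.prod_filter_bne_one]

theorem Set.Finite.exists_pairwise_key_lt {s : Set α} (hs : s.Finite) {key : α → β}
    (hkey : s.InjOn key) :
    ∃ l : List α, l.Pairwise (fun a b => key b < key a) ∧ ∀ a, a ∈ l ↔ a ∈ s := by
  let l := hs.toFinset.toList.mergeSort (fun a b => decide (key b ≤ key a))
  have hle : l.Pairwise (fun a b => decide (key b ≤ key a)) :=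
    List.pairwise_mergeSort (fun a b c hab hbc => by simp only [decide_eq_true_eq] at *; exact hbc.trans hab)
      (fun a b => by simpa using le_total (key b) (key a)) _
  have hnodup : l.Nodup := (List.mergeSort_perm _ _).nodup_iff.mpr (Finset.nodup_toList _)
  have hmem : ∀ a, a ∈ l ↔ a ∈ s := by simp [l]
  refine ⟨l, (hle.and hnodup).imp_of_mem fun ha hb ⟨hab, hne⟩ => ?_, hmem⟩
  exact (decide_eq_true_iff.mp hab).lt_of_ne
    fun h => hne (hkey ((hmem _).mp ha) ((hmem _).mp hb) h.symm)

end OrderedProduct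

theorem List.Nodup.apply_eq_of_prod_map_eq {α G : Type*} [Group G] {f g : α → G} {l : List α}
    (hl : l.Nodup) {z : α} (hz : z ∈ l) (hfg : ∀ a ∈ l, a ≠ z → f a = g a)
    (h : (l.map f).prod = (l.map g).prod) : f z = g z := by
  obtain ⟨l₁, l₂, rfl⟩ := List.append_of_mem hz
  have hz₁ : z ∉ l₁ := fun hz₁ => List.disjoint_of_nodup_append hl hz₁ List.mem_cons_self
  have hz₂ : z ∉ l₂ := (List.nodup_cons.mp (List.nodup_append.mp hl).2.1).1
  have h₁ : l₁.map f = l₁.map g := List.map_congr_left fun a ha =>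
    hfg a (by simp [ha]) (by rintro rfl; exact hz₁ ha)
  have h₂ : l₂.map f = l₂.map g := List.map_congr_left fun a ha =>
    hfg a (by simp [ha]) (by rintro rfl; exact hz₂ ha)
  simpa [h₁, h₂] using h

open scoped InnerProductSpace

theorem norm_lt_norm_add_of_inner_eq_zero {E : Type*} [NormedAddCommGroup E]
    [InnerProductSpace ℝ E] {x v : E} (h : ⟪x, v⟫_ℝ = 0) (hv : v ≠ 0) : ‖x‖ < ‖x + v‖ := by
  rw [mul_self_lt_mul_self_iff (norm_nonneg _) (norm_nonneg _),
    norm_add_sq_eq_norm_sq_add_norm_sq_real h]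
  exact lt_add_of_pos_right _ (mul_self_pos.mpr (norm_ne_zero_iff.mpr hv))

theorem emb_injective {d : ℕ} : Function.Injective (emb (d := d)) := fun y z h =>
  funext fun i => by simpa [emb] using congrArg (· i) h

theorem finite_setOf_norm_emb_le (d : ℕ) (r : ℝ) : {y : Fin d → ℤ | ‖emb y‖ ≤ r}.Finite := by
  refine (Set.finite_Icc (fun _ => -⌈r⌉) (fun _ => ⌈r⌉)).subset fun y hy => ?_
  have hcoord (i : Fin d) : |y i| ≤ ⌈r⌉ := by
    have : |(y i : ℝ)| ≤ r := by simpa [emb] using (PiLp.norm_apply_le (emb y) i).trans hy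
    exact_mod_cast this.trans (Int.le_ceil r)
  exact ⟨fun i => neg_le_of_abs_le (hcoord i), fun i => le_of_abs_le (hcoord i)⟩

def latticeLine {d : ℕ} (x θ : EuclideanSpace ℝ (Fin d)) : Set (Fin d → ℤ) :=
  {z | ∃ t : ℝ, emb z = x + t • θ}

def lineKey {d : ℕ} (x θ : EuclideanSpace ℝ (Fin d)) (z : Fin d → ℤ) : ℝ :=
  ∑ i, ((z i : ℝ) - x i) * θ i

theorem lineKey_eq {d : ℕ} {x θ : EuclideanSpace ℝ (Fin d)} {z : Fin d → ℤ} {t : ℝ}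
    (ht : emb z = x + t • θ) : lineKey x θ z = t * ‖θ‖ ^ 2 := by
  have hz (i : Fin d) : (z i : ℝ) = x i + t * θ i := by simpa [emb] using congrArg (· i) ht
  simp only [lineKey, hz, EuclideanSpace.norm_eq, Real.norm_eq_abs, sq_abs]
  rw [Real.sq_sqrt (by positivity), Finset.mul_sum]
  exact Finset.sum_congr rfl fun i _ => by ring

theorem injOn_lineKey {d : ℕ} (x θ : EuclideanSpace ℝ (Fin d)) :
    (latticeLine x θ).InjOn (lineKey x θ) := by
  rintro y₁ ⟨t₁, h₁⟩ y₂ ⟨t₂, h₂⟩ hkey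
  rw [lineKey_eq h₁, lineKey_eq h₂] at hkey
  apply emb_injective
  rcases eq_or_ne θ 0 with rfl | hθ
  · simp [h₁, h₂]
  · rw [h₁, h₂, mul_right_cancel₀ (by positivity) hkey]

theorem exists_pairwise_lineKey_lt {d : ℕ} (x θ : EuclideanSpace ℝ (Fin d)) (r : ℝ) :
    ∃ l : List (Fin d → ℤ), l.Pairwise (fun a b => lineKey x θ b < lineKey x θ a) ∧
      ∀ y, y ∈ l ↔ y ∈ latticeLine x θ ∧ ‖emb y‖ ≤ r :=
  ((finite_setOf_norm_emb_le d r).inter_of_right _).exists_pairwise_key_lt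
    ((injOn_lineKey x θ).mono Set.inter_subset_left)

theorem discS_eq_prod {d : ℕ} {M : Type*} [Monoid M] {F : (Fin d → ℤ) → M} {r : ℝ}
    (hF : ∀ y, ¬ ‖emb y‖ ≤ r → F y = 1) {x θ : EuclideanSpace ℝ (Fin d)}
    {l : List (Fin d → ℤ)} (hl : l.Pairwise (fun a b => lineKey x θ b < lineKey x θ a))
    (hmem : ∀ y, y ∈ l ↔ y ∈ latticeLine x θ ∧ ‖emb y‖ ≤ r) :
    discS F x θ = (l.map F).prod :=
  oprodBy_eq_prod_of_mem_iff hl fun y => by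
    rw [hmem]
    exact ⟨fun ⟨hline, hFy⟩ => ⟨⟨hline, not_not.mp (mt (hF y) hFy)⟩, hFy⟩,
      fun ⟨⟨hline, _⟩, hFy⟩ => ⟨hline, hFy⟩⟩

theorem norm_emb_lt_of_mem_latticeLine {d : ℕ} {z y : Fin d → ℤ} {θ : EuclideanSpace ℝ (Fin d)}
    (horth : ⟪emb z, θ⟫_ℝ = 0) (hy : y ∈ latticeLine (emb z) θ) (hyz : y ≠ z) :
    ‖emb z‖ < ‖emb y‖ := by
  obtain ⟨t, ht⟩ := hy
  rw [ht]
  refine norm_lt_norm_add_of_inner_eq_zero (by rw [real_inner_smul_right, horth, mul_zero]) ?_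
  intro h
  exact hyz (emb_injective (by rw [ht, h, add_zero]))

theorem inner_emb_rayDir (θ₀ : EuclideanSpace ℝ (Fin 2)) (z : Fin 2 → ℤ) :
    ⟪emb z, rayDir θ₀ z⟫_ℝ = 0 := by
  rw [rayDir]
  split_ifs with hz
  · simp [hz, emb, PiLp.inner_apply]
  · simp [PiLp.inner_apply, Fin.sum_univ_two, emb]
    ring

theorem stmt6_general (n : ℕ) (r : ℝ)
    (θ₀ : EuclideanSpace ℝ (Fin 2))
    (F G : (Fin 2 → ℤ) → GL (Fin n) ℂ)
    (hF : ∀ y : Fin 2 → ℤ, ¬ ‖emb y‖ ≤ r → F y = 1)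
    (hG : ∀ y : Fin 2 → ℤ, ¬ ‖emb y‖ ≤ r → G y = 1)
    (h : ∀ z : Fin 2 → ℤ, discS F (emb z) (rayDir θ₀ z) = discS G (emb z) (rayDir θ₀ z)) :
    F = G := by
  by_contra hne
  have hball : {y | F y ≠ G y} ⊆ {y | ‖emb y‖ ≤ r} := fun y hy => by
    by_contra hr
    exact hy ((hF y hr).trans (hG y hr).symm)
  obtain ⟨z, hzFG, hzmax⟩ := Set.exists_max_image _ (fun y => ‖emb y‖)
    ((finite_setOf_norm_emb_le 2 r).subset hball) (Function.ne_iff.mp hne)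
  obtain ⟨l, hl, hmem⟩ := exists_pairwise_lineKey_lt (emb z) (rayDir θ₀ z) r
  refine hzFG (hl.nodup_of_key_lt.apply_eq_of_prod_map_eq
    ((hmem z).mpr ⟨⟨0, by simp⟩, hball hzFG⟩) (fun y hy hyz => ?_) ?_)
  · by_contra hFG
    exact (hzmax y hFG).not_gt
      (norm_emb_lt_of_mem_latticeLine (inner_emb_rayDir θ₀ z) ((hmem y).mp hy).1 hyz)
  · rw [← discS_eq_prod hF hl hmem, ← discS_eq_prod hG hl hmem, h z]

/-- Theorem 2.1, d = 2, uniqueness: the discrete non-abelian X-ray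
transform on the rational rays γ_z, z ∈ ℤ², uniquely determines a function
F : ℤ² → GL(n,ℂ) equal to I outside B_r ∩ ℤ². -/
theorem stmt6 (n : ℕ) (hn : 1 ≤ n) (r : ℝ) (hr : 0 < r)
    (θ₀ : EuclideanSpace ℝ (Fin 2))
    (hθ₀ : ∃ w : Fin 2 → ℤ, w ≠ 0 ∧ θ₀ = ‖emb w‖⁻¹ • emb w)
    (F G : (Fin 2 → ℤ) → GL (Fin n) ℂ)
    (hF : ∀ y : Fin 2 → ℤ, ¬ ‖emb y‖ ≤ r → F y = 1)
    (hG : ∀ y : Fin 2 → ℤ, ¬ ‖emb y‖ ≤ r → G y = 1)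
    (h : ∀ z : Fin 2 → ℤ, discS F (emb z) (rayDir θ₀ z) = discS G (emb z) (rayDir θ₀ z)) :
    F = G :=
  stmt6_general n r θ₀ F G hF hG h
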